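/- Fix a > 0, d₁ > 0, d₂ > 0, λ > 0, w_o > 0 and angles θ_i, θ_r with sin θ_i > 0 and sin θ_r > 0. Let k = 2π/λ and w₁ = λ d₁/(π w_o). For L_x > 0, L_y > 0 define G̃₂(L_x, L_y) = erf((√2/2) L_x sin θ_i / w₁) · erf((√2/2) L_y / w₁), c₁ = k sin θ_r L_x/(2 d₂), c₂ = k L_y/(2 d₂), and G̃₁(L_x, L_y) = (16 d₂² G̃₂(L_x,L_y) / (π³ a² k² L_x L_y sin θ_r)) · [c₁ a √π · Si(c₁ a √π) + cos(c₁ a √π) − 1] · [c₂ a √π · Si(c₂ a √π) + cos(c₂ a √π) − 1]. Then, as (L_x, L_y) → (0⁺, 0⁺), G̃₁(L_x, L_y)/(L_x L_y)² converges to 2 π² a² w_o² sin θ_i sin θ_r / (λ⁴ d₁² d₂²); i.e., for small surfaces G̃₁ ≈ G₁ := 4π · (4π Σ² sin θ_r sin θ_i / λ⁴) · g_LS · g_PD with Σ = L_x L_y, g_LS = 2π w_o²/(4π d₁²) and g_PD = π a²/(4π d₂²), so the collected power scales quadratically with the surface area Σ. -/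

import Mathlib

/-
For `x, y > 0` the quotient `G̃₁ / (Lx Ly)²` is a constant times the product of
`erf (α x) / x * g (γ₁ x) / x²` and `erf (δ y) / y * g (γ₂ y) / y²`, where
`g u = u Si u + cos u - 1`. Since `erf' 0 = 2 / √π`, `Si' 0 = sinc 0 = 1` and
`cos u - 1 = -(u² / 2) sinc (u / 2)²`, we get `erf u / u → 2 / √π` and `g u / u² → 1 / 2`,
so the two factors tend to `α γ₁² / √π` and `δ γ₂² / √π`; the rest is algebra.
-/

open Real MeasureTheory Filter

/-- The error function `erf x = (2/√π) ∫₀ˣ e^{-t²} dt`. -/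
noncomputable def erf (x : ℝ) : ℝ := (2 / Real.sqrt π) * ∫ t in (0:ℝ)..x, Real.exp (-t^2)

/-- The sine integral `Si x = ∫₀ˣ (sin t)/t dt`. -/
noncomputable def Si (x : ℝ) : ℝ := ∫ t in (0:ℝ)..x, Real.sin t / t

open Topology

theorem tendsto_div_self_of_hasDerivAt {f : ℝ → ℝ} {f' : ℝ} (hf : HasDerivAt f f' 0)
    (h0 : f 0 = 0) : Tendsto (fun x => f x / x) (𝓝[≠] 0) (𝓝 f') := by
  simpa [h0, div_eq_inv_mul] using hf.tendsto_slope_zero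

theorem Filter.Tendsto.comp_mul_div_pow {f : ℝ → ℝ} {n : ℕ} {L : ℝ}
    (h : Tendsto (fun x => f x / x ^ n) (𝓝[≠] 0) (𝓝 L)) {c : ℝ} (hc : c ≠ 0) :
    Tendsto (fun x => f (c * x) / x ^ n) (𝓝[≠] 0) (𝓝 (c ^ n * L)) := by
  have hmul : Tendsto (c * ·) (𝓝[≠] 0) (𝓝[≠] 0) := by
    refine tendsto_nhdsWithin_of_tendsto_nhds_of_eventually_within _ ?_ ?_
    · exact ((continuous_const_mul c).tendsto' 0 0 (mul_zero c)).mono_left nhdsWithin_le_nhds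
    · filter_upwards [self_mem_nhdsWithin] with x hx using mul_ne_zero hc hx
  refine ((h.comp hmul).const_mul (c ^ n)).congr' ?_
  filter_upwards [self_mem_nhdsWithin] with x hx
  simp only [Function.comp, mul_pow]
  field_simp

theorem erf_zero : erf 0 = 0 := by simp [erf]

theorem hasDerivAt_erf (x : ℝ) : HasDerivAt erf (2 / √π * exp (-x ^ 2)) x :=
  ((by fun_prop : Continuous fun t : ℝ => exp (-t ^ 2)).integral_hasStrictDerivAt 0 x).hasDerivAt
    |>.const_mul _

theorem Si_eq_integral_sinc : Si = fun x => ∫ t in (0:ℝ)..x, sinc t := by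
  ext x
  refine intervalIntegral.integral_congr_ae ?_
  filter_upwards [Measure.ae_ne volume 0] with t ht _ using (sinc_of_ne_zero ht).symm

theorem Si_zero : Si 0 = 0 := by simp [Si]

theorem hasDerivAt_Si (x : ℝ) : HasDerivAt Si (sinc x) x := by
  rw [Si_eq_integral_sinc]
  exact (continuous_sinc.integral_hasStrictDerivAt 0 x).hasDerivAt

theorem tendsto_erf_div_self : Tendsto (fun x => erf x / x) (𝓝[≠] 0) (𝓝 (2 / √π)) := by
  simpa using tendsto_div_self_of_hasDerivAt (hasDerivAt_erf 0) erf_zero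

theorem tendsto_Si_div_self : Tendsto (fun x => Si x / x) (𝓝[≠] 0) (𝓝 1) := by
  simpa using tendsto_div_self_of_hasDerivAt (hasDerivAt_Si 0) Si_zero

theorem cos_sub_one_eq_neg_mul_sinc_sq (x : ℝ) : cos x - 1 = -(x ^ 2 / 2) * sinc (x / 2) ^ 2 := by
  rcases eq_or_ne x 0 with rfl | hx
  · simp
  have h := cos_two_mul_eq_one_sub (x / 2)
  rw [mul_div_cancel₀ x two_ne_zero] at h
  rw [h, sinc_of_ne_zero (div_ne_zero hx two_ne_zero)]
  field_simp
  ring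

theorem tendsto_cos_sub_one_div_sq :
    Tendsto (fun x => (cos x - 1) / x ^ 2) (𝓝[≠] 0) (𝓝 (-1 / 2)) := by
  have hsinc : Tendsto (fun x : ℝ => -sinc (x / 2) ^ 2 / 2) (𝓝 0) (𝓝 (-1 / 2)) := by
    simpa using
      ((continuous_sinc.comp (continuous_id.div_const 2)).pow 2).neg.div_const 2 |>.tendsto 0
  refine (hsinc.mono_left nhdsWithin_le_nhds).congr' ?_
  filter_upwards [self_mem_nhdsWithin] with x (hx : x ≠ 0)
  rw [cos_sub_one_eq_neg_mul_sinc_sq]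
  field_simp

theorem tendsto_mul_Si_add_cos_sub_one_div_sq :
    Tendsto (fun x => (x * Si x + cos x - 1) / x ^ 2) (𝓝[≠] 0) (𝓝 (1 / 2)) := by
  have := tendsto_Si_div_self.add tendsto_cos_sub_one_div_sq
  norm_num at this
  refine this.congr' ?_
  filter_upwards [self_mem_nhdsWithin] with x (hx : x ≠ 0)
  field_simp
  ring

theorem tendsto_erf_mul_div_mul_Si_cos_div_sq {α γ : ℝ} (hα : α ≠ 0) (hγ : γ ≠ 0) :
    Tendsto (fun x => erf (α * x) / x * ((γ * x * Si (γ * x) + cos (γ * x) - 1) / x ^ 2))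
      (𝓝[>] 0) (𝓝 (α * γ ^ 2 / √π)) := by
  have herf := (show Tendsto (fun x => erf x / x ^ 1) (𝓝[≠] 0) (𝓝 (2 / √π)) by
    simpa using tendsto_erf_div_self).comp_mul_div_pow hα
  have hap := tendsto_mul_Si_add_cos_sub_one_div_sq.comp_mul_div_pow hγ
  simp only [pow_one] at herf
  convert (herf.mul hap).mono_left (nhdsGT_le_nhdsNE 0) using 2
  ring

/-- Corollary 1 (quadratic power scaling regime): as `(Lx, Ly) → (0⁺, 0⁺)`, the geometric
loss `G̃₁(Lx, Ly)` of Lemma 1 satisfies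
`G̃₁(Lx,Ly)/(Lx Ly)² → 2π² a² w_o² sin θi sin θr / (λ⁴ d₁² d₂²)`, i.e. `G̃₁ ≈ G₁` with
`G₁ = 4π (4π Σ² sin θr sin θi / λ⁴) g_LS g_PD`, `Σ = Lx Ly`, `g_LS = 2π w_o²/(4π d₁²)`,
`g_PD = π a²/(4π d₂²)`. -/
theorem quadratic_power_scaling (a d₁ d₂ lam w_o θi θr k w₁ : ℝ)
    (ha : 0 < a) (hd₁ : 0 < d₁) (hd₂ : 0 < d₂) (hlam : 0 < lam) (hwo : 0 < w_o)
    (hθi : 0 < Real.sin θi) (hθr : 0 < Real.sin θr)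
    (hk : k = 2 * π / lam) (hw₁ : w₁ = lam * d₁ / (π * w_o))
    (G₂t : ℝ → ℝ → ℝ)
    (hG₂t : ∀ Lx Ly, G₂t Lx Ly =
      erf (Real.sqrt 2 / 2 * (Lx * Real.sin θi / w₁)) * erf (Real.sqrt 2 / 2 * (Ly / w₁)))
    (c₁ c₂ : ℝ → ℝ)
    (hc₁ : ∀ Lx, c₁ Lx = k * Real.sin θr * Lx / (2 * d₂))
    (hc₂ : ∀ Ly, c₂ Ly = k * Ly / (2 * d₂))
    (G₁t : ℝ → ℝ → ℝ)
    (hG₁t : ∀ Lx Ly, G₁t Lx Ly =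
      (16 * d₂ ^ 2 * G₂t Lx Ly / (π ^ 3 * a ^ 2 * k ^ 2 * Lx * Ly * Real.sin θr)) *
        (c₁ Lx * a * Real.sqrt π * Si (c₁ Lx * a * Real.sqrt π)
          + Real.cos (c₁ Lx * a * Real.sqrt π) - 1) *
        (c₂ Ly * a * Real.sqrt π * Si (c₂ Ly * a * Real.sqrt π)
          + Real.cos (c₂ Ly * a * Real.sqrt π) - 1)) :
    Tendsto (fun p : ℝ × ℝ => G₁t p.1 p.2 / (p.1 * p.2) ^ 2)
      ((nhdsWithin 0 (Set.Ioi 0)) ×ˢ (nhdsWithin 0 (Set.Ioi 0)))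
      (nhds (2 * π ^ 2 * a ^ 2 * w_o ^ 2 * Real.sin θi * Real.sin θr
        / (lam ^ 4 * d₁ ^ 2 * d₂ ^ 2))) ∧
    ∀ Sig : ℝ, 0 < Sig →
      4 * π * (4 * π * Sig ^ 2 * Real.sin θr * Real.sin θi / lam ^ 4) *
          (2 * π * w_o ^ 2 / (4 * π * d₁ ^ 2)) * (π * a ^ 2 / (4 * π * d₂ ^ 2)) =
        (2 * π ^ 2 * a ^ 2 * w_o ^ 2 * Real.sin θi * Real.sin θr
          / (lam ^ 4 * d₁ ^ 2 * d₂ ^ 2)) * Sig ^ 2 := by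
  have hw₁0 : w₁ ≠ 0 := by rw [hw₁]; positivity
  have hk0 : k ≠ 0 := by rw [hk]; positivity
  refine ⟨?_, fun Sig _ => by field_simp⟩
  have hx := tendsto_erf_mul_div_mul_Si_cos_div_sq (α := √2 / 2 * (sin θi / w₁))
    (γ := k * sin θr * a * √π / (2 * d₂)) (by positivity) (by positivity)
  have hy := tendsto_erf_mul_div_mul_Si_cos_div_sq (α := √2 / 2 / w₁)
    (γ := k * a * √π / (2 * d₂)) (by positivity) (by positivity)
  convert ((hx.comp tendsto_fst).mul (hy.comp tendsto_snd)).const_mul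
    (16 * d₂ ^ 2 / (π ^ 3 * a ^ 2 * k ^ 2 * sin θr)) using 1
  · ext ⟨x, y⟩
    simp only [Function.comp, hG₁t, hG₂t, hc₁, hc₂]
    ring_nf
  · rw [hk, hw₁]
    congr 1
    field_simp
    rw [sq_sqrt zero_le_two, sq_sqrt pi_pos.le]
    ring
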